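/- Let X be a random n×p matrix such that X^T X is almost surely positive definite and both E[X^T X] and E[(X^T X)^{-1}] exist. Then E[(X^T X)^{-1}] - (E[X^T X])^{-1} is positive semidefinite. -/

import Mathlib

/-!
For positive definite `A`, the block matrix `[[A, 1], [1, A⁻¹]]` is positive semidefinite,
its Schur complement `A⁻¹ - 1 * A⁻¹ * 1` being zero. Taking expectations preserves positive
semidefiniteness, so `[[E A, 1], [1, E A⁻¹]]` is positive semidefinite; as `E A` is positive
definite, its Schur complement `E A⁻¹ - (E A)⁻¹` is positive semidefinite as well.
-/

open MeasureTheory Matrix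

theorem Matrix.PosDef.posSemidef_fromBlocks_one_inv {m K : Type*} [Fintype m] [DecidableEq m]
    [Field K] [PartialOrder K] [StarRing K] [StarOrderedRing K] {A : Matrix m m K}
    (hA : A.PosDef) : (fromBlocks A 1 1 A⁻¹).PosSemidef := by
  have := hA.isUnit.invertible
  simpa using (PosDef.fromBlocks₁₁ (1 : Matrix m m K) A⁻¹ hA).2 (by simpa using .zero)

theorem MeasureTheory.integral_pos_of_ae_pos {α : Type*} [MeasurableSpace α] {μ : Measure α}
    [NeZero μ] {f : α → ℝ} (hfi : Integrable f μ) (hf : ∀ᵐ x ∂μ, 0 < f x) :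
    0 < ∫ x, f x ∂μ := by
  rw [integral_pos_iff_support_of_nonneg_ae (hf.mono fun _ hx => hx.le) hfi, pos_iff_ne_zero]
  intro h0
  obtain ⟨x, hx, hx0⟩ := (hf.and (measure_eq_zero_iff_ae_notMem.1 h0)).exists
  exact hx0 hx.ne'

section EntrywiseIntegral

variable {Ω m : Type*} [MeasurableSpace Ω] {μ : Measure Ω} {f : Ω → Matrix m m ℝ}

noncomputable def entrywiseIntegral (μ : Measure Ω) (f : Ω → Matrix m m ℝ) : Matrix m m ℝ :=
  Matrix.of fun i j => ∫ ω, f ω i j ∂μ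

theorem isHermitian_entrywiseIntegral (h : ∀ᵐ ω ∂μ, (f ω).IsHermitian) :
    (entrywiseIntegral μ f).IsHermitian :=
  IsHermitian.ext fun i j => integral_congr_ae (h.mono fun _ hω => hω.apply i j)

section Blocks

variable [DecidableEq m] {g : Ω → Matrix m m ℝ}

theorem integrable_fromBlocks_one_apply [IsFiniteMeasure μ]
    (hf : ∀ i j, Integrable (fun ω => f ω i j) μ) (hg : ∀ i j, Integrable (fun ω => g ω i j) μ) :
    ∀ i j, Integrable (fun ω => fromBlocks (f ω) 1 1 (g ω) i j) μ := by
  rintro (i | i) (j | j) <;> simp [hf, hg]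

theorem entrywiseIntegral_fromBlocks_one [IsProbabilityMeasure μ] :
    entrywiseIntegral μ (fun ω => fromBlocks (f ω) 1 1 (g ω)) =
      fromBlocks (entrywiseIntegral μ f) 1 1 (entrywiseIntegral μ g) := by
  ext (i | i) (j | j) <;> simp [entrywiseIntegral, one_apply]

end Blocks

variable [Fintype m]

theorem integrable_dotProduct_mulVec (hf : ∀ i j, Integrable (fun ω => f ω i j) μ)
    (v w : m → ℝ) : Integrable (fun ω => v ⬝ᵥ (f ω *ᵥ w)) μ := by
  simp only [dotProduct, mulVec, Finset.mul_sum]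
  fun_prop

theorem dotProduct_entrywiseIntegral_mulVec (hf : ∀ i j, Integrable (fun ω => f ω i j) μ)
    (v w : m → ℝ) : v ⬝ᵥ (entrywiseIntegral μ f *ᵥ w) = ∫ ω, v ⬝ᵥ (f ω *ᵥ w) ∂μ := by
  simp only [dotProduct, mulVec, entrywiseIntegral, of_apply, Finset.mul_sum]
  rw [integral_finsetSum _ fun i _ => by fun_prop]
  refine Finset.sum_congr rfl fun i _ => ?_
  rw [integral_finsetSum _ fun j _ => by fun_prop]
  simp only [integral_const_mul, integral_mul_const]

theorem posSemidef_entrywiseIntegral (hf : ∀ i j, Integrable (fun ω => f ω i j) μ)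
    (h : ∀ᵐ ω ∂μ, (f ω).PosSemidef) : (entrywiseIntegral μ f).PosSemidef := by
  refine posSemidef_iff_dotProduct_mulVec.2
    ⟨isHermitian_entrywiseIntegral (h.mono fun _ hω => hω.isHermitian), fun v => ?_⟩
  rw [star_trivial, dotProduct_entrywiseIntegral_mulVec hf]
  exact integral_nonneg_of_ae (h.mono fun _ hω => hω.dotProduct_mulVec_nonneg v)

theorem posDef_entrywiseIntegral [NeZero μ] (hf : ∀ i j, Integrable (fun ω => f ω i j) μ)
    (h : ∀ᵐ ω ∂μ, (f ω).PosDef) : (entrywiseIntegral μ f).PosDef := by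
  refine posDef_iff_dotProduct_mulVec.2
    ⟨isHermitian_entrywiseIntegral (h.mono fun _ hω => hω.isHermitian), fun v hv => ?_⟩
  rw [star_trivial, dotProduct_entrywiseIntegral_mulVec hf]
  exact integral_pos_of_ae_pos (integrable_dotProduct_mulVec hf v v)
    (h.mono fun _ hω => hω.dotProduct_mulVec_pos hv)

end EntrywiseIntegral

/-- Groves–Rothenberg (1969): for a random matrix `X` with `XᵀX` a.s. positive definite
and integrable entrywise expectations, `E[(XᵀX)⁻¹] - (E[XᵀX])⁻¹` is positive semidefinite. -/
theorem groves_rothenberg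
    {Ω : Type*} [MeasurableSpace Ω] (μ : Measure Ω) [IsProbabilityMeasure μ]
    {n p : ℕ} (X : Ω → Matrix (Fin n) (Fin p) ℝ)
    (hpos : ∀ᵐ ω ∂μ, ((X ω)ᵀ * X ω).PosDef)
    (hint1 : ∀ i j, Integrable (fun ω => ((X ω)ᵀ * X ω) i j) μ)
    (hint2 : ∀ i j, Integrable (fun ω => (((X ω)ᵀ * X ω)⁻¹) i j) μ) :
    ((Matrix.of fun i j => ∫ ω, (((X ω)ᵀ * X ω)⁻¹) i j ∂μ) -
      (Matrix.of fun i j => ∫ ω, ((X ω)ᵀ * X ω) i j ∂μ)⁻¹).PosSemidef := by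
  have hmean : (entrywiseIntegral μ fun ω => (X ω)ᵀ * X ω).PosDef :=
    posDef_entrywiseIntegral hint1 hpos
  have hblocks := posSemidef_entrywiseIntegral (integrable_fromBlocks_one_apply hint1 hint2)
    (hpos.mono fun _ hω => hω.posSemidef_fromBlocks_one_inv)
  rw [entrywiseIntegral_fromBlocks_one] at hblocks
  have := hmean.isUnit.invertible
  have hschur := (PosDef.fromBlocks₁₁ 1 (entrywiseIntegral μ fun ω => ((X ω)ᵀ * X ω)⁻¹)
    hmean).1 (by simpa using hblocks)
  rwa [conjTranspose_one, one_mul, mul_one] at hschur
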